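/- arXiv:1507.07112 — 2 statements merged into one kernel-verified Lean document; each statement's English description precedes it below -/
import Mathlib

section
/- Let (A^{•,•}, ∂, ∂̄) be a bounded double complex of finite-dimensional ℂ-vector spaces. Write h^k_BC = Σ_{p+q=k} dim H_BC^{p,q}, h^k_A = Σ_{p+q=k} dim H_A^{p,q}, and b_k = dim H^k of the total complex with differential ∂ + ∂̄. Then for every k ∈ ℤ, the non-∂∂̄-degree Δ^k := h^k_BC + h^k_A − 2 b_k is a non-negative integer. -/
open LinearMap Submodule Module

variable (A : ℤ → ℤ → Type) [∀ p q, AddCommGroup (A p q)] [∀ p q, Module ℂ (A p q)]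
variable (d1 : ∀ p q, A p q →ₗ[ℂ] A (p + 1) q)
variable (d2 : ∀ p q, A p q →ₗ[ℂ] A p (q + 1))

/-- The composition `∂∂̄ : A p q → A (p+1) (q+1)`. -/
abbrev ddb (p q : ℤ) : A p q →ₗ[ℂ] A (p + 1) (q + 1) :=
  (d1 p (q + 1)).comp (d2 p q)

/-- Bott-Chern cohomology at bidegree `(p+1, q+1)`:
`(ker ∂ ∩ ker ∂̄) / im ∂∂̄`. -/
abbrev HBC (p q : ℤ) :=
  ↥(ker (d1 (p+1) (q+1)) ⊓ ker (d2 (p+1) (q+1))) ⧸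
    ((range (ddb A d1 d2 p q)).comap (ker (d1 (p+1) (q+1)) ⊓ ker (d2 (p+1) (q+1))).subtype)

/-- Aeppli cohomology at bidegree `(p+1, q+1)`:
`ker ∂∂̄ / (im ∂ + im ∂̄)`. -/
abbrev HA (p q : ℤ) :=
  ↥(ker (ddb A d1 d2 (p+1) (q+1))) ⧸
    ((range (d1 p (q+1)) ⊔ range (d2 (p+1) q)).comap (ker (ddb A d1 d2 (p+1) (q+1))).subtype)

/-- Dolbeault cohomology `ker ∂̄ / im ∂̄` at bidegree `(p+1, q+1)`. -/
abbrev Hdb (p q : ℤ) :=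
  ↥(ker (d2 (p+1) (q+1))) ⧸ ((range (d2 (p+1) q)).comap (ker (d2 (p+1) (q+1))).subtype)

/-- Conjugate Dolbeault cohomology `ker ∂ / im ∂` at bidegree `(p+1, q+1)`. -/
abbrev Hd (p q : ℤ) :=
  ↥(ker (d1 (p+1) (q+1))) ⧸ ((range (d1 p (q+1))).comap (ker (d1 (p+1) (q+1))).subtype)

open DirectSum in
/-- The total complex in degree `k`: `⊕_{p+q=k} A^{p,q}`. -/
abbrev Tot (k : ℤ) : Type _ := ⨁ p : ℤ, A p (k - p)

/-- Transport along equalities of bidegrees. -/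
def lcast {p q p' q' : ℤ} (hp : p = p') (hq : q = q') : A p q ≃ₗ[ℂ] A p' q' := by
  subst hp; subst hq; exact LinearEquiv.refl ℂ (A p q)

/-- The total differential `∂ + ∂̄ : Tot k → Tot (k+1)`. -/
def D (k : ℤ) : Tot A k →ₗ[ℂ] Tot A (k + 1) :=
  DirectSum.toModule ℂ ℤ (Tot A (k + 1)) fun p =>
    ((DirectSum.lof ℂ ℤ (fun r => A r (k + 1 - r)) (p + 1)).comp
      ((lcast A (rfl : (p + 1 : ℤ) = p + 1)
        (by omega : k - p = k + 1 - (p + 1))).toLinearMap.comp (d1 p (k - p))))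
    + ((DirectSum.lof ℂ ℤ (fun r => A r (k + 1 - r)) p).comp
      ((lcast A (rfl : (p : ℤ) = p)
        (by omega : k - p + 1 = k + 1 - p)).toLinearMap.comp (d2 p (k - p))))

/-- De Rham cohomology of the total complex in degree `k+1`. -/
abbrev HdR (k : ℤ) :=
  ↥(ker (D A d1 d2 (k + 1))) ⧸
    ((range (D A d1 d2 k)).comap (ker (D A d1 d2 (k + 1))).subtype)

/-! ### Auxiliary lemmas -/

section aux

lemma lcast_rfl {p q : ℤ} (x : A p q) : lcast A rfl rfl x = x := rfl

lemma lcast_lcast {p q p' q' p'' q'' : ℤ} (hp : p = p') (hq : q = q') (hp' : p' = p'')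
    (hq' : q' = q'') (x : A p q) :
    lcast A hp' hq' (lcast A hp hq x) = lcast A (hp.trans hp') (hq.trans hq') x := by
  subst hp; subst hq; subst hp'; subst hq'; rfl

lemma d1_lcast {p p' q q' : ℤ} (hp : p = p') (hq : q = q') (x : A p q) :
    d1 p' q' (lcast A hp hq x) = lcast A (by rw [hp]) hq (d1 p q x) := by
  subst hp; subst hq; rfl

lemma d2_lcast {p p' q q' : ℤ} (hp : p = p') (hq : q = q') (x : A p q) :
    d2 p' q' (lcast A hp hq x) = lcast A hp (by rw [hq]) (d2 p q x) := by
  subst hp; subst hq; rfl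

lemma lcast_eq_zero_iff {p q p' q' : ℤ} (hp : p = p') (hq : q = q') (x : A p q) :
    lcast A hp hq x = 0 ↔ x = 0 := by
  subst hp; subst hq; exact Iff.rfl

/-- `finrank` of the quotient of a submodule by (the pullback of) another submodule. -/
lemma finrank_quot {M : Type*} [AddCommGroup M] [Module ℂ M] [FiniteDimensional ℂ M]
    (K S : Submodule ℂ M) :
    finrank ℂ (↥K ⧸ S.comap K.subtype) + finrank ℂ ↥(K ⊓ S) = finrank ℂ ↥K := by
  have h1 := Submodule.finrank_quotient_add_finrank (S.comap K.subtype)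
  have h2 : finrank ℂ ↥(S.comap K.subtype) = finrank ℂ ↥(K ⊓ S) := by
    rw [← Submodule.map_comap_subtype]
    exact (Submodule.equivMapOfInjective K.subtype K.injective_subtype _).finrank_eq
  omega

lemma Icc_succ_right' (a b : ℤ) (h : a ≤ b + 1) :
    Finset.Icc a (b + 1) = insert (b + 1) (Finset.Icc a b) := by
  ext x; simp only [Finset.mem_Icc, Finset.mem_insert]; omega

lemma tele_up (f h : ℤ → ℕ) (a b : ℤ) (hab : a ≤ b + 1)
    (hstep : ∀ j ∈ Finset.Icc a b, f j ≤ f (j + 1) + h j) :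
    f a ≤ f (b + 1) + ∑ j ∈ Finset.Icc a b, h j := by
  obtain ⟨c, rfl⟩ : ∃ c : ℕ, b = a - 1 + c := ⟨(b - (a - 1)).toNat, by omega⟩
  clear hab
  revert hstep
  induction c with
  | zero =>
    intro _
    rw [show (a - 1 + ((0 : ℕ) : ℤ)) = a - 1 by simp, show a - 1 + 1 = a by omega,
      Finset.Icc_eq_empty (by omega)]
    simp
  | succ c ih =>
    intro hstep
    rw [show (a - 1 + ((c + 1 : ℕ) : ℤ)) = (a - 1 + (c : ℕ)) + 1 by push_cast; ring]
      at hstep ⊢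
    have h1 := ih (fun j hj => hstep j (by simp only [Finset.mem_Icc] at hj ⊢; omega))
    have h2 := hstep (a - 1 + (c : ℕ) + 1) (by simp only [Finset.mem_Icc]; omega)
    rw [Icc_succ_right' a _ (by omega), Finset.sum_insert (by simp [Finset.mem_Icc])]
    omega

lemma tele_down (f h : ℤ → ℕ) (a b : ℤ) (hab : a ≤ b + 1)
    (hstep : ∀ j ∈ Finset.Icc a b, f (j + 1) ≤ f j + h j) :
    f (b + 1) ≤ f a + ∑ j ∈ Finset.Icc a b, h j := by
  obtain ⟨c, rfl⟩ : ∃ c : ℕ, b = a - 1 + c := ⟨(b - (a - 1)).toNat, by omega⟩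
  clear hab
  revert hstep
  induction c with
  | zero =>
    intro _
    rw [show (a - 1 + ((0 : ℕ) : ℤ)) = a - 1 by simp, show a - 1 + 1 = a by omega,
      Finset.Icc_eq_empty (by omega)]
    simp
  | succ c ih =>
    intro hstep
    rw [show (a - 1 + ((c + 1 : ℕ) : ℤ)) = (a - 1 + (c : ℕ)) + 1 by push_cast; ring]
      at hstep ⊢
    have h1 := ih (fun j hj => hstep j (by simp only [Finset.mem_Icc] at hj ⊢; omega))
    have h2 := hstep (a - 1 + (c : ℕ) + 1) (by simp only [Finset.mem_Icc]; omega)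
    rw [Icc_succ_right' a _ (by omega), Finset.sum_insert (by simp [Finset.mem_Icc])]
    omega


end aux

/-! ### Components of the total differential -/

section D

lemma Tot_of_apply (k p j : ℤ) (a : A p (k - p)) :
    (DirectSum.lof ℂ ℤ (fun r => A r (k - r)) p a) j
      = if h : p = j then lcast A h (by rw [h]) a else 0 := by
  rw [DirectSum.lof_eq_of, DirectSum.of_apply]
  split
  · next h => subst h; rfl
  · rfl

lemma D_lof (k p : ℤ) (a : A p (k - p)) :
    D A d1 d2 k (DirectSum.lof ℂ ℤ (fun r => A r (k - r)) p a) =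
      DirectSum.lof ℂ ℤ (fun r => A r (k + 1 - r)) (p + 1)
        (lcast A rfl (by omega) (d1 p (k - p) a)) +
      DirectSum.lof ℂ ℤ (fun r => A r (k + 1 - r)) p
        (lcast A rfl (by omega) (d2 p (k - p) a)) := by
  rw [D, DirectSum.toModule_lof]
  rfl

lemma D_apply (k r : ℤ) (x : Tot A k) :
    (D A d1 d2 k x) r =
      lcast A (by omega) (by omega) (d1 (r - 1) (k - (r - 1)) (x (r - 1)))
      + lcast A rfl (by omega) (d2 r (k - r) (x r)) := by
  induction x using DirectSum.induction_on with
  | zero => simp [map_zero, DirectSum.zero_apply]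
  | add x y hx hy =>
    rw [map_add, DirectSum.add_apply, hx, hy, DirectSum.add_apply, DirectSum.add_apply,
      map_add, map_add, map_add, map_add]
    abel
  | of p a =>
    rw [← DirectSum.lof_eq_of ℂ, D_lof, DirectSum.add_apply,
      Tot_of_apply A (k + 1) (p + 1) r, Tot_of_apply A (k + 1) p r,
      Tot_of_apply A k p (r - 1), Tot_of_apply A k p r]
    by_cases hr1 : p + 1 = r
    · subst hr1
      rw [dif_pos rfl, dif_neg (by omega), dif_pos (show p = p + 1 - 1 by omega),
        dif_neg (by omega)]
      rw [d1_lcast, lcast_lcast, map_zero, map_zero, add_zero, lcast_lcast]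
      exact (add_zero _).symm
    · by_cases hr2 : p = r
      · subst hr2
        rw [dif_neg (by omega), dif_pos rfl, dif_neg (by omega), dif_pos rfl]
        rw [d2_lcast, lcast_lcast, map_zero, map_zero, zero_add, lcast_lcast]
        exact (zero_add _).symm
      · rw [dif_neg (by omega), dif_neg (by omega), dif_neg (by omega), dif_neg (by omega)]
        simp

lemma D_D (hd1 : ∀ p q (x : A p q), d1 (p+1) q (d1 p q x) = 0)
    (hd2 : ∀ p q (x : A p q), d2 p (q+1) (d2 p q x) = 0)
    (hc : ∀ p q (x : A p q), d1 p (q+1) (d2 p q x) + d2 (p+1) q (d1 p q x) = 0)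
    (k : ℤ) (x : Tot A k) :
    D A d1 d2 (k + 1) (D A d1 d2 k x) = 0 := by
  induction x using DirectSum.induction_on with
  | zero => simp [map_zero]
  | add x y hx hy => rw [map_add, map_add, hx, hy, add_zero]
  | of p a =>
    rw [← DirectSum.lof_eq_of ℂ, D_lof, map_add, D_lof, D_lof]
    rw [d1_lcast, d2_lcast, d1_lcast, d2_lcast, lcast_lcast, lcast_lcast, lcast_lcast,
      lcast_lcast, hd1 p (k - p) a, hd2 p (k - p) a, map_zero, map_zero, map_zero, map_zero]
    rw [zero_add, add_zero]
    have hx : d2 (p + 1) (k - p) (d1 p (k - p) a)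
        = -(d1 p (k - p + 1) (d2 p (k - p) a)) :=
      eq_neg_of_add_eq_zero_right (hc p (k - p) a)
    rw [hx, map_neg, map_neg]
    exact neg_add_cancel _

end D

/-! ### Filtration submodules and component facts -/

section filtration

lemma component_apply (k i : ℤ) (x : Tot A k) :
    DirectSum.component ℂ ℤ (fun r => A r (k - r)) i x = x i := rfl

lemma x_apply_eq (k : ℤ) (x : Tot A k) {i j : ℤ} (h : i = j) :
    x j = lcast A h (by rw [h]) (x i) := by subst h; rfl

/-- The submodule of `Tot A k` of elements supported in columns `≥ p`. -/
def Klo (k p : ℤ) : Submodule ℂ (Tot A k) where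
  carrier := {x | ∀ r, r < p → x r = 0}
  add_mem' := fun {a b} ha hb r hr => by
    rw [DirectSum.add_apply, ha r hr, hb r hr, add_zero]
  zero_mem' := fun r _ => DirectSum.zero_apply (β := fun r => A r (k - r)) r
  smul_mem' := fun c {a} ha r hr => by
    rw [DFinsupp.smul_apply, ha r hr, smul_zero]

/-- The submodule of `Tot A k` of elements supported in columns `≤ p`. -/
def Khi (k p : ℤ) : Submodule ℂ (Tot A k) where
  carrier := {x | ∀ r, p < r → x r = 0}
  add_mem' := fun {a b} ha hb r hr => by
    rw [DirectSum.add_apply, ha r hr, hb r hr, add_zero]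
  zero_mem' := fun r _ => DirectSum.zero_apply (β := fun r => A r (k - r)) r
  smul_mem' := fun c {a} ha r hr => by
    rw [DFinsupp.smul_apply, ha r hr, smul_zero]

lemma ker_comp_d2 (k p : ℤ) (x : Tot A (k + 1)) (hx : D A d1 d2 (k + 1) x = 0)
    (h0 : x (p - 1) = 0) : d2 p (k + 1 - p) (x p) = 0 := by
  have h := D_apply A d1 d2 (k + 1) p x
  rw [hx, DirectSum.zero_apply, h0, map_zero, map_zero, zero_add] at h
  exact (lcast_eq_zero_iff A rfl _ _).mp h.symm

lemma ker_comp_d1 (k p : ℤ) (x : Tot A (k + 1)) (hx : D A d1 d2 (k + 1) x = 0)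
    (h0 : x (p + 1) = 0) : d1 p (k + 1 - p) (x p) = 0 := by
  have h := D_apply A d1 d2 (k + 1) (p + 1) x
  rw [hx, DirectSum.zero_apply, h0, map_zero, map_zero, add_zero] at h
  rw [x_apply_eq A (k + 1) x (show p = p + 1 - 1 by omega), d1_lcast, lcast_lcast] at h
  exact (lcast_eq_zero_iff A _ _ _).mp h.symm

open DirectSum in
/-- Boundedness implies the total spaces are finite-dimensional. -/
lemma finite_tot [∀ p q, FiniteDimensional ℂ (A p q)] (m n : ℤ)
    (hbd : ∀ p q : ℤ, (p < m ∨ n < p ∨ q < m ∨ n < q) → Subsingleton (A p q))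
    (k : ℤ) : FiniteDimensional ℂ (Tot A k) := by
  classical
  let Φ : (⨁ p : {t : ℤ // t ∈ Finset.Icc m n}, A (p : ℤ) (k - (p : ℤ))) →ₗ[ℂ] Tot A k :=
    DirectSum.toModule ℂ _ _ fun p => DirectSum.lof ℂ ℤ (fun r => A r (k - r)) (p : ℤ)
  have hsurj : Function.Surjective Φ := by
    intro x
    induction x using DirectSum.induction_on with
    | zero => exact ⟨0, map_zero _⟩
    | of p a =>
      by_cases hp : p ∈ Finset.Icc m n
      · refine ⟨DirectSum.lof ℂ _ _ (⟨p, hp⟩ : {t : ℤ // t ∈ Finset.Icc m n}) a, ?_⟩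
        simp only [Φ]
        rw [DirectSum.toModule_lof, DirectSum.lof_eq_of]
      · have hs : Subsingleton (A p (k - p)) := by
          refine hbd p (k - p) ?_
          simp only [Finset.mem_Icc] at hp; omega
        have ha : a = 0 := Subsingleton.elim a 0
        subst ha
        exact ⟨0, by rw [map_zero, map_zero]⟩
    | add x y hx hy =>
      obtain ⟨u, hu⟩ := hx; obtain ⟨v, hv⟩ := hy
      exact ⟨u + v, by rw [map_add, hu, hv]⟩
  haveI : FiniteDimensional ℂ (⨁ p : {t : ℤ // t ∈ Finset.Icc m n}, A (p : ℤ) (k - (p : ℤ))) :=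
    Module.Finite.equiv (DirectSum.linearEquivFunOnFintype ℂ _ _).symm
  exact Module.Finite.of_surjective Φ hsurj

end filtration

/-! ### The pointwise inequality `h_∂ + h_∂̄ ≤ h_BC + h_A` -/

section spot
variable [∀ p q, FiniteDimensional ℂ (A p q)]

lemma spot
    (hd1 : ∀ p q (x : A p q), d1 (p+1) q (d1 p q x) = 0)
    (hd2 : ∀ p q (x : A p q), d2 p (q+1) (d2 p q x) = 0)
    (hc : ∀ p q (x : A p q), d1 p (q+1) (d2 p q x) + d2 (p+1) q (d1 p q x) = 0)
    (p q : ℤ) :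
    finrank ℂ (Hd A d1 p q) + finrank ℂ (Hdb A d2 p q)
      ≤ finrank ℂ (HBC A d1 d2 p q) + finrank ℂ (HA A d1 d2 p q) := by
  have hI1K1 : range (d1 p (q+1)) ≤ ker (d1 (p+1) (q+1)) := by
    rintro _ ⟨y, rfl⟩; exact mem_ker.mpr (hd1 p (q+1) y)
  have hI2K2 : range (d2 (p+1) q) ≤ ker (d2 (p+1) (q+1)) := by
    rintro _ ⟨y, rfl⟩; exact mem_ker.mpr (hd2 (p+1) q y)
  have hI12I1 : range (ddb A d1 d2 p q) ≤ range (d1 p (q+1)) := by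
    rintro _ ⟨y, rfl⟩; exact ⟨d2 p q y, rfl⟩
  have hI12I2 : range (ddb A d1 d2 p q) ≤ range (d2 (p+1) q) := by
    rintro _ ⟨y, rfl⟩
    refine ⟨-(d1 p q y), ?_⟩
    rw [map_neg]
    exact neg_eq_of_add_eq_zero_left (hc p q y)
  have hI12K : range (ddb A d1 d2 p q) ≤ ker (d1 (p+1) (q+1)) ⊓ ker (d2 (p+1) (q+1)) := by
    refine le_inf ?_ ?_
    · rintro _ ⟨y, rfl⟩
      exact mem_ker.mpr (hd1 p (q+1) (d2 p q y))
    · rintro _ ⟨y, rfl⟩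
      refine mem_ker.mpr ?_
      have h := hc p (q+1) (d2 p q y)
      rw [hd2 p q y, map_zero, zero_add] at h
      exact h
  have hK1Kd : ker (d1 (p+1) (q+1)) ≤ ker (ddb A d1 d2 (p+1) (q+1)) := by
    intro x hx
    refine mem_ker.mpr ?_
    have h := hc (p+1) (q+1) x
    rw [mem_ker.mp hx, map_zero, add_zero] at h
    exact h
  have hK2Kd : ker (d2 (p+1) (q+1)) ≤ ker (ddb A d1 d2 (p+1) (q+1)) := by
    intro x hx
    refine mem_ker.mpr ?_
    show d1 (p+1) (q+1+1) (d2 (p+1) (q+1) x) = 0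
    rw [mem_ker.mp hx, map_zero]
  have hI1Kd : range (d1 p (q+1)) ≤ ker (ddb A d1 d2 (p+1) (q+1)) := by
    rintro _ ⟨y, rfl⟩
    refine mem_ker.mpr ?_
    show d1 (p+1) (q+1+1) (d2 (p+1) (q+1) (d1 p (q+1) y)) = 0
    have h := hc p (q+1) y
    have h2 : d2 (p+1) (q+1) (d1 p (q+1) y) = -(d1 p (q+1+1) (d2 p (q+1) y)) :=
      eq_neg_of_add_eq_zero_right h
    rw [h2, map_neg, hd1 p (q+1+1) (d2 p (q+1) y), neg_zero]
  have hI2Kd : range (d2 (p+1) q) ≤ ker (ddb A d1 d2 (p+1) (q+1)) := by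
    rintro _ ⟨y, rfl⟩
    refine mem_ker.mpr ?_
    show d1 (p+1) (q+1+1) (d2 (p+1) (q+1) (d2 (p+1) q y)) = 0
    rw [hd2 (p+1) q y, map_zero]
  have e1 : finrank ℂ (HBC A d1 d2 p q)
      + finrank ℂ ↥((ker (d1 (p+1) (q+1)) ⊓ ker (d2 (p+1) (q+1))) ⊓ range (ddb A d1 d2 p q))
      = finrank ℂ ↥(ker (d1 (p+1) (q+1)) ⊓ ker (d2 (p+1) (q+1))) := finrank_quot _ _
  have e2 : finrank ℂ (HA A d1 d2 p q)
      + finrank ℂ ↥(ker (ddb A d1 d2 (p+1) (q+1)) ⊓ (range (d1 p (q+1)) ⊔ range (d2 (p+1) q)))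
      = finrank ℂ ↥(ker (ddb A d1 d2 (p+1) (q+1))) := finrank_quot _ _
  have e3 : finrank ℂ (Hd A d1 p q)
      + finrank ℂ ↥(ker (d1 (p+1) (q+1)) ⊓ range (d1 p (q+1)))
      = finrank ℂ ↥(ker (d1 (p+1) (q+1))) := finrank_quot _ _
  have e4 : finrank ℂ (Hdb A d2 p q)
      + finrank ℂ ↥(ker (d2 (p+1) (q+1)) ⊓ range (d2 (p+1) q))
      = finrank ℂ ↥(ker (d2 (p+1) (q+1))) := finrank_quot _ _
  rw [inf_eq_right.mpr hI12K] at e1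
  rw [inf_eq_right.mpr (sup_le hI1Kd hI2Kd)] at e2
  rw [inf_eq_right.mpr hI1K1] at e3
  rw [inf_eq_right.mpr hI2K2] at e4
  have e5 : finrank ℂ ↥(ker (d1 (p+1) (q+1)) ⊔ ker (d2 (p+1) (q+1)))
      + finrank ℂ ↥(ker (d1 (p+1) (q+1)) ⊓ ker (d2 (p+1) (q+1)))
      = finrank ℂ ↥(ker (d1 (p+1) (q+1))) + finrank ℂ ↥(ker (d2 (p+1) (q+1))) :=
    Submodule.finrank_sup_add_finrank_inf_eq _ _
  have e6 : finrank ℂ ↥(range (d1 p (q+1)) ⊔ range (d2 (p+1) q))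
      + finrank ℂ ↥(range (d1 p (q+1)) ⊓ range (d2 (p+1) q))
      = finrank ℂ ↥(range (d1 p (q+1))) + finrank ℂ ↥(range (d2 (p+1) q)) :=
    Submodule.finrank_sup_add_finrank_inf_eq _ _
  have e7 : finrank ℂ ↥(ker (d1 (p+1) (q+1)) ⊔ ker (d2 (p+1) (q+1)))
      ≤ finrank ℂ ↥(ker (ddb A d1 d2 (p+1) (q+1))) :=
    Submodule.finrank_mono (sup_le hK1Kd hK2Kd)
  have e8 : finrank ℂ ↥(range (ddb A d1 d2 p q))
      ≤ finrank ℂ ↥(range (d1 p (q+1)) ⊓ range (d2 (p+1) q)) :=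
    Submodule.finrank_mono (le_inf hI12I1 hI12I2)
  omega

end spot

/-! ### The one-step filtration estimates -/

section steps
variable [∀ p q, FiniteDimensional ℂ (A p q)]

open DirectSum in
lemma step_db
    (hd1 : ∀ p q (x : A p q), d1 (p+1) q (d1 p q x) = 0)
    (hd2 : ∀ p q (x : A p q), d2 p (q+1) (d2 p q x) = 0)
    (hc : ∀ p q (x : A p q), d1 p (q+1) (d2 p q x) + d2 (p+1) q (d1 p q x) = 0)
    (k j : ℤ) [FiniteDimensional ℂ (Tot A (k + 1))] :
    finrank ℂ ↥((range (D A d1 d2 k) ⊓ ker (D A d1 d2 (k + 1)))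
        ⊔ (ker (D A d1 d2 (k + 1)) ⊓ Klo A (k + 1) (j + 1)))
      ≤ finrank ℂ ↥((range (D A d1 d2 k) ⊓ ker (D A d1 d2 (k + 1)))
          ⊔ (ker (D A d1 d2 (k + 1)) ⊓ Klo A (k + 1) (j + 1 + 1)))
        + finrank ℂ (Hdb A d2 j (k + 1 - j - 2)) := by
  set S' := range (D A d1 d2 k) ⊓ ker (D A d1 d2 (k + 1)) with hS'
  set F₁ := ker (D A d1 d2 (k + 1)) ⊓ Klo A (k + 1) (j + 1) with hF₁
  set F₂ := ker (D A d1 d2 (k + 1)) ⊓ Klo A (k + 1) (j + 1 + 1) with hF₂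
  have hc0 : ∀ v : ↥F₁,
      ((lcast A rfl (show k + 1 - (j + 1) = k + 1 - j - 2 + 1 by omega)).toLinearMap
        ∘ₗ (DirectSum.component ℂ ℤ (fun r => A r (k + 1 - r)) (j + 1))
        ∘ₗ F₁.subtype) v ∈ ker (d2 (j + 1) (k + 1 - j - 2 + 1)) := by
    intro v
    rw [mem_ker]
    show d2 (j + 1) (k + 1 - j - 2 + 1)
      (lcast A rfl _ ((v : Tot A (k + 1)) (j + 1))) = 0
    rw [d2_lcast, lcast_eq_zero_iff]
    exact ker_comp_d2 A d1 d2 k (j + 1) v (mem_ker.mp (Submodule.mem_inf.mp v.2).1)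
      ((Submodule.mem_inf.mp v.2).2 (j + 1 - 1) (by omega))
  set g : ↥F₁ →ₗ[ℂ] Hdb A d2 j (k + 1 - j - 2) :=
    (Submodule.mkQ ((range (d2 (j + 1) (k + 1 - j - 2))).comap
        (ker (d2 (j + 1) (k + 1 - j - 2 + 1))).subtype))
      ∘ₗ (LinearMap.codRestrict (ker (d2 (j + 1) (k + 1 - j - 2 + 1)))
        ((lcast A rfl (show k + 1 - (j + 1) = k + 1 - j - 2 + 1 by omega)).toLinearMap
          ∘ₗ (DirectSum.component ℂ ℤ (fun r => A r (k + 1 - r)) (j + 1))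
          ∘ₗ F₁.subtype) hc0) with hg
  have hker : ker g ≤ (S' ⊔ F₂).comap F₁.subtype := by
    rintro v hv
    rw [mem_ker, hg, LinearMap.comp_apply, Submodule.mkQ_apply,
      Submodule.Quotient.mk_eq_zero, Submodule.mem_comap] at hv
    rw [Submodule.subtype_apply, LinearMap.codRestrict_apply] at hv
    obtain ⟨w, hw⟩ := hv
    rw [LinearMap.comp_apply, LinearMap.comp_apply, Submodule.subtype_apply] at hw
    rw [LinearEquiv.coe_coe] at hw
    rw [component_apply A (k + 1) (j + 1)] at hw
    set x : Tot A (k + 1) := ↑v with hx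
    set w' : A (j + 1) (k - (j + 1)) := lcast A rfl (by omega) w with hw'
    set y : Tot A (k + 1) :=
      D A d1 d2 k (DirectSum.lof ℂ ℤ (fun r => A r (k - r)) (j + 1) w') with hy
    have hyK : y ∈ ker (D A d1 d2 (k + 1)) := mem_ker.mpr (D_D A d1 d2 hd1 hd2 hc k _)
    have hyR : y ∈ range (D A d1 d2 k) := ⟨_, rfl⟩
    have hcomp : ∀ r, y r = (DirectSum.lof ℂ ℤ (fun r => A r (k + 1 - r)) (j + 1 + 1)
        (lcast A rfl (by omega) (d1 (j + 1) (k - (j + 1)) w'))) r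
      + (DirectSum.lof ℂ ℤ (fun r => A r (k + 1 - r)) (j + 1)
        (lcast A rfl (by omega) (d2 (j + 1) (k - (j + 1)) w'))) r := by
      intro r
      rw [hy, D_lof, DirectSum.add_apply]
    have hyj : y (j + 1) = x (j + 1) := by
      rw [hcomp (j + 1), Tot_of_apply, Tot_of_apply, dif_neg (by omega), dif_pos rfl, zero_add]
      rw [hw', d2_lcast, lcast_lcast, lcast_lcast, hw, lcast_lcast]
      exact lcast_rfl A _
    have hsub : x - y ∈ F₂ := by
      rw [hF₂]
      refine Submodule.mem_inf.mpr ⟨sub_mem (Submodule.mem_inf.mp v.2).1 hyK, ?_⟩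
      intro r hr
      rw [DirectSum.sub_apply]
      by_cases hrj : r = j + 1
      · subst hrj
        rw [hyj, sub_self]
      · have h1 : x r = 0 := (Submodule.mem_inf.mp v.2).2 r (by omega)
        have h2 : y r = 0 := by
          rw [hcomp r, Tot_of_apply, Tot_of_apply, dif_neg (by omega), dif_neg (by omega),
            add_zero]
        rw [h1, h2, sub_self]
    refine Submodule.mem_comap.mpr ?_
    rw [Submodule.subtype_apply]
    have hxy : y + (x - y) = x := by abel
    show x ∈ S' ⊔ F₂
    rw [← hxy]
    exact add_mem (Submodule.mem_sup_left (Submodule.mem_inf.mpr ⟨hyR, hyK⟩))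
      (Submodule.mem_sup_right hsub)
  have hF21 : F₂ ≤ F₁ :=
    inf_le_inf_left _ (fun x hx r hr => hx r (by omega))
  have hUF : (S' ⊔ F₂) ⊔ F₁ = S' ⊔ F₁ := by rw [sup_assoc, sup_eq_right.mpr hF21]
  have e1 : finrank ℂ ↥((S' ⊔ F₂) ⊔ F₁) + finrank ℂ ↥((S' ⊔ F₂) ⊓ F₁)
      = finrank ℂ ↥(S' ⊔ F₂) + finrank ℂ ↥F₁ :=
    Submodule.finrank_sup_add_finrank_inf_eq _ _
  have e2 : finrank ℂ ↥(range g) + finrank ℂ ↥(ker g) = finrank ℂ ↥F₁ :=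
    LinearMap.finrank_range_add_finrank_ker g
  have e3 : finrank ℂ ↥(ker g) ≤ finrank ℂ ↥((S' ⊔ F₂).comap F₁.subtype) :=
    Submodule.finrank_mono hker
  have e4 : finrank ℂ ↥((S' ⊔ F₂).comap F₁.subtype) = finrank ℂ ↥(F₁ ⊓ (S' ⊔ F₂)) := by
    rw [← Submodule.map_comap_subtype]
    exact (Submodule.equivMapOfInjective F₁.subtype F₁.injective_subtype _).finrank_eq
  have e5 : finrank ℂ ↥(range g) ≤ finrank ℂ (Hdb A d2 j (k + 1 - j - 2)) :=
    Submodule.finrank_le _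
  rw [inf_comm] at e4
  rw [← hUF]
  omega

end steps

section steps2
variable [∀ p q, FiniteDimensional ℂ (A p q)]

open DirectSum in
lemma step_d
    (hd1 : ∀ p q (x : A p q), d1 (p+1) q (d1 p q x) = 0)
    (hd2 : ∀ p q (x : A p q), d2 p (q+1) (d2 p q x) = 0)
    (hc : ∀ p q (x : A p q), d1 p (q+1) (d2 p q x) + d2 (p+1) q (d1 p q x) = 0)
    (k j : ℤ) [FiniteDimensional ℂ (Tot A (k + 1))] :
    finrank ℂ ↥((range (D A d1 d2 k) ⊓ ker (D A d1 d2 (k + 1)))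
        ⊔ (ker (D A d1 d2 (k + 1)) ⊓ Khi A (k + 1) (j + 1)))
      ≤ finrank ℂ ↥((range (D A d1 d2 k) ⊓ ker (D A d1 d2 (k + 1)))
          ⊔ (ker (D A d1 d2 (k + 1)) ⊓ Khi A (k + 1) j))
        + finrank ℂ (Hd A d1 j (k + 1 - j - 2)) := by
  set S' := range (D A d1 d2 k) ⊓ ker (D A d1 d2 (k + 1)) with hS'
  set F₁ := ker (D A d1 d2 (k + 1)) ⊓ Khi A (k + 1) (j + 1) with hF₁
  set F₀ := ker (D A d1 d2 (k + 1)) ⊓ Khi A (k + 1) j with hF₀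
  have hc0 : ∀ v : ↥F₁,
      ((lcast A rfl (show k + 1 - (j + 1) = k + 1 - j - 2 + 1 by omega)).toLinearMap
        ∘ₗ (DirectSum.component ℂ ℤ (fun r => A r (k + 1 - r)) (j + 1))
        ∘ₗ F₁.subtype) v ∈ ker (d1 (j + 1) (k + 1 - j - 2 + 1)) := by
    intro v
    rw [mem_ker]
    show d1 (j + 1) (k + 1 - j - 2 + 1)
      (lcast A rfl _ ((v : Tot A (k + 1)) (j + 1))) = 0
    rw [d1_lcast, lcast_eq_zero_iff]
    exact ker_comp_d1 A d1 d2 k (j + 1) v (mem_ker.mp (Submodule.mem_inf.mp v.2).1)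
      ((Submodule.mem_inf.mp v.2).2 (j + 1 + 1) (by omega))
  set g : ↥F₁ →ₗ[ℂ] Hd A d1 j (k + 1 - j - 2) :=
    (Submodule.mkQ ((range (d1 j (k + 1 - j - 2 + 1))).comap
        (ker (d1 (j + 1) (k + 1 - j - 2 + 1))).subtype))
      ∘ₗ (LinearMap.codRestrict (ker (d1 (j + 1) (k + 1 - j - 2 + 1)))
        ((lcast A rfl (show k + 1 - (j + 1) = k + 1 - j - 2 + 1 by omega)).toLinearMap
          ∘ₗ (DirectSum.component ℂ ℤ (fun r => A r (k + 1 - r)) (j + 1))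
          ∘ₗ F₁.subtype) hc0) with hg
  have hker : ker g ≤ (S' ⊔ F₀).comap F₁.subtype := by
    rintro v hv
    rw [mem_ker, hg, LinearMap.comp_apply, Submodule.mkQ_apply,
      Submodule.Quotient.mk_eq_zero, Submodule.mem_comap] at hv
    rw [Submodule.subtype_apply, LinearMap.codRestrict_apply] at hv
    obtain ⟨w, hw⟩ := hv
    rw [LinearMap.comp_apply, LinearMap.comp_apply, Submodule.subtype_apply] at hw
    rw [LinearEquiv.coe_coe] at hw
    rw [component_apply A (k + 1) (j + 1)] at hw
    set x : Tot A (k + 1) := ↑v with hx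
    set w' : A j (k - j) := lcast A rfl (by omega) w with hw'
    set y : Tot A (k + 1) :=
      D A d1 d2 k (DirectSum.lof ℂ ℤ (fun r => A r (k - r)) j w') with hy
    have hyK : y ∈ ker (D A d1 d2 (k + 1)) := mem_ker.mpr (D_D A d1 d2 hd1 hd2 hc k _)
    have hyR : y ∈ range (D A d1 d2 k) := ⟨_, rfl⟩
    have hcomp : ∀ r, y r = (DirectSum.lof ℂ ℤ (fun r => A r (k + 1 - r)) (j + 1)
        (lcast A rfl (by omega) (d1 j (k - j) w'))) r
      + (DirectSum.lof ℂ ℤ (fun r => A r (k + 1 - r)) j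
        (lcast A rfl (by omega) (d2 j (k - j) w'))) r := by
      intro r
      rw [hy, D_lof, DirectSum.add_apply]
    have hyj : y (j + 1) = x (j + 1) := by
      rw [hcomp (j + 1), Tot_of_apply, Tot_of_apply, dif_pos rfl, dif_neg (by omega), add_zero]
      rw [hw', d1_lcast, lcast_lcast, lcast_lcast, hw, lcast_lcast]
      exact lcast_rfl A _
    have hsub : x - y ∈ F₀ := by
      rw [hF₀]
      refine Submodule.mem_inf.mpr ⟨sub_mem (Submodule.mem_inf.mp v.2).1 hyK, ?_⟩
      intro r hr
      rw [DirectSum.sub_apply]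
      by_cases hrj : r = j + 1
      · subst hrj
        rw [hyj, sub_self]
      · have h1 : x r = 0 := (Submodule.mem_inf.mp v.2).2 r (by omega)
        have h2 : y r = 0 := by
          rw [hcomp r, Tot_of_apply, Tot_of_apply, dif_neg (by omega), dif_neg (by omega),
            add_zero]
        rw [h1, h2, sub_self]
    refine Submodule.mem_comap.mpr ?_
    rw [Submodule.subtype_apply]
    have hxy : y + (x - y) = x := by abel
    show x ∈ S' ⊔ F₀
    rw [← hxy]
    exact add_mem (Submodule.mem_sup_left (Submodule.mem_inf.mpr ⟨hyR, hyK⟩))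
      (Submodule.mem_sup_right hsub)
  have hF01 : F₀ ≤ F₁ :=
    inf_le_inf_left _ (fun x hx r hr => hx r (by omega))
  have hUF : (S' ⊔ F₀) ⊔ F₁ = S' ⊔ F₁ := by rw [sup_assoc, sup_eq_right.mpr hF01]
  have e1 : finrank ℂ ↥((S' ⊔ F₀) ⊔ F₁) + finrank ℂ ↥((S' ⊔ F₀) ⊓ F₁)
      = finrank ℂ ↥(S' ⊔ F₀) + finrank ℂ ↥F₁ :=
    Submodule.finrank_sup_add_finrank_inf_eq _ _
  have e2 : finrank ℂ ↥(range g) + finrank ℂ ↥(ker g) = finrank ℂ ↥F₁ :=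
    LinearMap.finrank_range_add_finrank_ker g
  have e3 : finrank ℂ ↥(ker g) ≤ finrank ℂ ↥((S' ⊔ F₀).comap F₁.subtype) :=
    Submodule.finrank_mono hker
  have e4 : finrank ℂ ↥((S' ⊔ F₀).comap F₁.subtype) = finrank ℂ ↥(F₁ ⊓ (S' ⊔ F₀)) := by
    rw [← Submodule.map_comap_subtype]
    exact (Submodule.equivMapOfInjective F₁.subtype F₁.injective_subtype _).finrank_eq
  have e5 : finrank ℂ ↥(range g) ≤ finrank ℂ (Hd A d1 j (k + 1 - j - 2)) :=
    Submodule.finrank_le _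
  rw [inf_comm] at e4
  rw [← hUF]
  omega

end steps2

/-! ### The Frölicher-type inequalities via the column/row filtrations -/

section frolicher
variable [∀ p q, FiniteDimensional ℂ (A p q)]

lemma frolicher_db (m n : ℤ)
    (hbd : ∀ p q : ℤ, (p < m ∨ n < p ∨ q < m ∨ n < q) → Subsingleton (A p q))
    (hd1 : ∀ p q (x : A p q), d1 (p+1) q (d1 p q x) = 0)
    (hd2 : ∀ p q (x : A p q), d2 p (q+1) (d2 p q x) = 0)
    (hc : ∀ p q (x : A p q), d1 p (q+1) (d2 p q x) + d2 (p+1) q (d1 p q x) = 0)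
    (hmn : m ≤ n + 5) (k : ℤ) [FiniteDimensional ℂ (Tot A (k + 1))] :
    finrank ℂ ↥(ker (D A d1 d2 (k + 1)))
      ≤ finrank ℂ ↥(range (D A d1 d2 k) ⊓ ker (D A d1 d2 (k + 1)))
        + ∑ j ∈ Finset.Icc (m - 2) (n + 2), finrank ℂ (Hdb A d2 j (k + 1 - j - 2)) := by
  have htele := tele_up
    (fun j => finrank ℂ ↥((range (D A d1 d2 k) ⊓ ker (D A d1 d2 (k + 1)))
      ⊔ (ker (D A d1 d2 (k + 1)) ⊓ Klo A (k + 1) (j + 1))))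
    (fun j => finrank ℂ (Hdb A d2 j (k + 1 - j - 2))) (m - 2) (n + 2) (by omega)
    (fun j _ => step_db A d1 d2 hd1 hd2 hc k j)
  have h1 : (range (D A d1 d2 k) ⊓ ker (D A d1 d2 (k + 1)))
      ⊔ (ker (D A d1 d2 (k + 1)) ⊓ Klo A (k + 1) (m - 2 + 1)) = ker (D A d1 d2 (k + 1)) := by
    have htop : Klo A (k + 1) (m - 2 + 1) = ⊤ := by
      rw [eq_top_iff]
      intro x _ r hr
      haveI := hbd r (k + 1 - r) (Or.inl (by omega))
      exact Subsingleton.elim _ _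
    rw [htop, inf_top_eq, sup_eq_right.mpr inf_le_right]
  have h2 : (range (D A d1 d2 k) ⊓ ker (D A d1 d2 (k + 1)))
      ⊔ (ker (D A d1 d2 (k + 1)) ⊓ Klo A (k + 1) (n + 2 + 1 + 1))
      = range (D A d1 d2 k) ⊓ ker (D A d1 d2 (k + 1)) := by
    have hbot : ker (D A d1 d2 (k + 1)) ⊓ Klo A (k + 1) (n + 2 + 1 + 1) = ⊥ := by
      rw [eq_bot_iff]
      intro x hx
      rw [Submodule.mem_bot]
      apply DFinsupp.ext
      intro r
      by_cases hr : r < n + 2 + 1 + 1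
      · exact (Submodule.mem_inf.mp hx).2 r hr
      · haveI := hbd r (k + 1 - r) (Or.inr (Or.inl (by omega)))
        exact Subsingleton.elim _ _
    rw [hbot, sup_bot_eq]
  rw [h1, h2] at htele
  exact htele

lemma frolicher_d (m n : ℤ)
    (hbd : ∀ p q : ℤ, (p < m ∨ n < p ∨ q < m ∨ n < q) → Subsingleton (A p q))
    (hd1 : ∀ p q (x : A p q), d1 (p+1) q (d1 p q x) = 0)
    (hd2 : ∀ p q (x : A p q), d2 p (q+1) (d2 p q x) = 0)
    (hc : ∀ p q (x : A p q), d1 p (q+1) (d2 p q x) + d2 (p+1) q (d1 p q x) = 0)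
    (hmn : m ≤ n + 5) (k : ℤ) [FiniteDimensional ℂ (Tot A (k + 1))] :
    finrank ℂ ↥(ker (D A d1 d2 (k + 1)))
      ≤ finrank ℂ ↥(range (D A d1 d2 k) ⊓ ker (D A d1 d2 (k + 1)))
        + ∑ j ∈ Finset.Icc (m - 2) (n + 2), finrank ℂ (Hd A d1 j (k + 1 - j - 2)) := by
  have htele := tele_down
    (fun j => finrank ℂ ↥((range (D A d1 d2 k) ⊓ ker (D A d1 d2 (k + 1)))
      ⊔ (ker (D A d1 d2 (k + 1)) ⊓ Khi A (k + 1) j)))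
    (fun j => finrank ℂ (Hd A d1 j (k + 1 - j - 2))) (m - 2) (n + 2) (by omega)
    (fun j _ => step_d A d1 d2 hd1 hd2 hc k j)
  have h1 : (range (D A d1 d2 k) ⊓ ker (D A d1 d2 (k + 1)))
      ⊔ (ker (D A d1 d2 (k + 1)) ⊓ Khi A (k + 1) (n + 2 + 1)) = ker (D A d1 d2 (k + 1)) := by
    have htop : Khi A (k + 1) (n + 2 + 1) = ⊤ := by
      rw [eq_top_iff]
      intro x _ r hr
      haveI := hbd r (k + 1 - r) (Or.inr (Or.inl (by omega)))
      exact Subsingleton.elim _ _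
    rw [htop, inf_top_eq, sup_eq_right.mpr inf_le_right]
  have h2 : (range (D A d1 d2 k) ⊓ ker (D A d1 d2 (k + 1)))
      ⊔ (ker (D A d1 d2 (k + 1)) ⊓ Khi A (k + 1) (m - 2))
      = range (D A d1 d2 k) ⊓ ker (D A d1 d2 (k + 1)) := by
    have hbot : ker (D A d1 d2 (k + 1)) ⊓ Khi A (k + 1) (m - 2) = ⊥ := by
      rw [eq_bot_iff]
      intro x hx
      rw [Submodule.mem_bot]
      apply DFinsupp.ext
      intro r
      by_cases hr : m - 2 < r
      · exact (Submodule.mem_inf.mp hx).2 r hr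
      · haveI := hbd r (k + 1 - r) (Or.inl (by omega))
        exact Subsingleton.elim _ _
    rw [hbot, sup_bot_eq]
  rw [h1, h2] at htele
  exact htele

end frolicher

/-! ### Main theorem -/

/-- the non-`∂∂̄`-degree `Δ^k = h^k_BC + h^k_A - 2 b_k` is
non-negative. -/
theorem stmt6
    [∀ p q, FiniteDimensional ℂ (A p q)]
    (m n : ℤ)
    (hbd : ∀ p q : ℤ, (p < m ∨ n < p ∨ q < m ∨ n < q) → Subsingleton (A p q))
    (hd1 : ∀ p q (x : A p q), d1 (p+1) q (d1 p q x) = 0)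
    (hd2 : ∀ p q (x : A p q), d2 p (q+1) (d2 p q x) = 0)
    (hc : ∀ p q (x : A p q), d1 p (q+1) (d2 p q x) + d2 (p+1) q (d1 p q x) = 0)
    :
    ∀ k : ℤ, 2 * finrank ℂ (HdR A d1 d2 k) ≤
      (∑ p ∈ Finset.Icc (m - 2) (n + 2), finrank ℂ (HBC A d1 d2 p (k + 1 - p - 2))) +
      (∑ p ∈ Finset.Icc (m - 2) (n + 2), finrank ℂ (HA A d1 d2 p (k + 1 - p - 2))) := by
  intro k
  by_cases hmn : m ≤ n + 5
  · haveI hfin : ∀ k', FiniteDimensional ℂ (Tot A k') := finite_tot A m n hbd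
    have hquot : finrank ℂ (HdR A d1 d2 k)
        + finrank ℂ ↥(ker (D A d1 d2 (k + 1)) ⊓ range (D A d1 d2 k))
        = finrank ℂ ↥(ker (D A d1 d2 (k + 1))) := finrank_quot _ _
    rw [inf_comm (ker (D A d1 d2 (k + 1))) (range (D A d1 d2 k))] at hquot
    have hdb := frolicher_db A d1 d2 m n hbd hd1 hd2 hc hmn k
    have hd := frolicher_d A d1 d2 m n hbd hd1 hd2 hc hmn k
    have hsum : ∑ j ∈ Finset.Icc (m - 2) (n + 2),
          (finrank ℂ (Hd A d1 j (k + 1 - j - 2)) + finrank ℂ (Hdb A d2 j (k + 1 - j - 2)))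
        ≤ ∑ j ∈ Finset.Icc (m - 2) (n + 2),
          (finrank ℂ (HBC A d1 d2 j (k + 1 - j - 2)) + finrank ℂ (HA A d1 d2 j (k + 1 - j - 2))) :=
      Finset.sum_le_sum (fun j _ => spot A d1 d2 hd1 hd2 hc j (k + 1 - j - 2))
    rw [Finset.sum_add_distrib, Finset.sum_add_distrib] at hsum
    omega
  · have hall : ∀ i : ℤ, Subsingleton (A i (k + 1 - i)) :=
      fun i => hbd i (k + 1 - i) (by omega)
    haveI : Subsingleton (Tot A (k + 1)) := by
      constructor
      intro x y
      apply DFinsupp.ext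
      intro r
      haveI := hall r
      exact Subsingleton.elim _ _
    haveI : Subsingleton (HdR A d1 d2 k) := by
      haveI : Subsingleton ↥(ker (D A d1 d2 (k + 1))) := by
        constructor; intro a b; exact Subtype.ext (Subsingleton.elim _ _)
      exact Quotient.instSubsingletonQuotient _
    rw [Module.finrank_zero_of_subsingleton]
    simp
end

section
/- Let (A^{•,•}, ∂, ∂̄) be a double complex of ℂ-vector spaces that is a direct sum of squares and dots (zigzags of length one, i.e., one-dimensional components with all differentials zero). Then the ∂∂̄-Lemma holds: in every bidegree, ker ∂ ∩ ker ∂̄ ∩ (im ∂ + im ∂̄) = im ∂∂̄. -/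
open LinearMap Submodule Module

variable (A : ℤ → ℤ → Type) [∀ p q, AddCommGroup (A p q)] [∀ p q, Module ℂ (A p q)]
variable (d1 : ∀ p q, A p q →ₗ[ℂ] A (p + 1) q)
variable (d2 : ∀ p q, A p q →ₗ[ℂ] A p (q + 1))

/-- A family of submodules closed under both differentials (a sub-double-complex). -/
def IsSubcomplex (S : ∀ p q : ℤ, Submodule ℂ (A p q)) : Prop :=
  ∀ p q : ℤ, (S p q).map (d1 p q) ≤ S (p + 1) q ∧ (S p q).map (d2 p q) ≤ S p (q + 1)

/-- A square: four one-dimensional components in bidegrees `(a,b)`, `(a+1,b)`,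
`(a,b+1)`, `(a+1,b+1)`, with all four connecting maps isomorphisms. -/
def IsSquareComplex (S : ∀ p q : ℤ, Submodule ℂ (A p q)) : Prop :=
  ∃ a b : ℤ, finrank ℂ (S a b) = 1 ∧
    (∀ r s : ℤ, ¬ ((r = a ∨ r = a + 1) ∧ (s = b ∨ s = b + 1)) → S r s = ⊥) ∧
    (S a b).map (d1 a b) = S (a + 1) b ∧ Disjoint (S a b) (ker (d1 a b)) ∧
    (S a b).map (d2 a b) = S a (b + 1) ∧ Disjoint (S a b) (ker (d2 a b)) ∧
    (S (a + 1) b).map (d2 (a + 1) b) = S (a + 1) (b + 1) ∧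
      Disjoint (S (a + 1) b) (ker (d2 (a + 1) b)) ∧
    (S a (b + 1)).map (d1 a (b + 1)) = S (a + 1) (b + 1) ∧
      Disjoint (S a (b + 1)) (ker (d1 a (b + 1)))

/-- A dot (zigzag of length one): a single one-dimensional component with zero
differentials. -/
def IsDot (S : ∀ p q : ℤ, Submodule ℂ (A p q)) : Prop :=
  ∃ a b : ℤ, finrank ℂ (S a b) = 1 ∧
    (∀ r s : ℤ, ¬ (r = a ∧ s = b) → S r s = ⊥) ∧
    (S a b).map (d1 a b) = ⊥ ∧ (S a b).map (d2 a b) = ⊥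

/-- A zigzag: a nonzero indecomposable sub-double-complex with components of
dimension at most one, finite support, and vanishing `∂∂̄` (which excludes squares);
such indecomposables are exactly the staircase-shaped complexes. -/
def IsZigzag (S : ∀ p q : ℤ, Submodule ℂ (A p q)) : Prop :=
  (∃ p q : ℤ, S p q ≠ ⊥) ∧
  (∀ p q : ℤ, finrank ℂ (S p q) ≤ 1) ∧
  (Set.Finite {pq : ℤ × ℤ | S pq.1 pq.2 ≠ ⊥}) ∧
  (∀ p q : ℤ, (S p q).map (ddb A d1 d2 p q) = ⊥) ∧
  (∀ T T' : ∀ p q : ℤ, Submodule ℂ (A p q),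
    IsSubcomplex A d1 d2 T → IsSubcomplex A d1 d2 T' →
    (∀ p q, T p q ⊔ T' p q = S p q) → (∀ p q, Disjoint (T p q) (T' p q)) →
    (∀ p q, T p q = ⊥) ∨ (∀ p q, T' p q = ⊥))

/-- `S : ι → ⋯` realizes the double complex `A` as an (internal) direct sum of the
sub-double-complexes `S i`. -/
def IsDecomposition (ι : Type) (S : ι → ∀ p q : ℤ, Submodule ℂ (A p q)) : Prop :=
  (∀ i, IsSubcomplex A d1 d2 (S i)) ∧
  (∀ p q : ℤ, (⨆ i, S i p q) = ⊤) ∧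
  (∀ p q : ℤ, ∀ i, Disjoint (S i p q) (⨆ j, ⨆ _ : j ≠ i, S j p q))

section aux

variable {M N : Type} [AddCommGroup M] [Module ℂ M] [AddCommGroup N] [Module ℂ N] {ι : Type} [DecidableEq ι]

theorem proj_exists (T : ι → Submodule ℂ M) (htop : (⨆ i, T i) = ⊤)
    (hind : ∀ i, Disjoint (T i) (⨆ j, ⨆ _ : j ≠ i, T j)) :
    ∃ π : ι → (M →ₗ[ℂ] M),
      (∀ i z, π i z ∈ T i) ∧
      (∀ i j (z : M), z ∈ T j → π i z = if i = j then z else 0) ∧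
      (∀ z : M, ∃ t : Finset ι, z = ∑ i ∈ t, π i z) := by
  classical
  have hint : DirectSum.IsInternal T :=
    DirectSum.isInternal_submodule_of_iSupIndep_of_iSup_eq_top hind htop
  set e := LinearEquiv.ofBijective (DirectSum.coeLinearMap T) hint with he
  refine ⟨fun i => (T i).subtype ∘ₗ (DirectSum.component ℂ ι _ i) ∘ₗ e.symm.toLinearMap,
    fun i z => (e.symm z i).2, ?_, ?_⟩
  · intro i j z hz
    have hc : ((T i).subtype ∘ₗ (DirectSum.component ℂ ι _ i) ∘ₗ e.symm.toLinearMap) z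
        = ((e.symm z) i : M) := rfl
    by_cases h : i = j
    · subst h
      rw [hc, hint.ofBijective_coeLinearMap_of_mem hz, if_pos rfl]
    · rw [hc, hint.ofBijective_coeLinearMap_of_mem_ne (Ne.symm h) hz, if_neg h]
      rfl
  · intro z
    refine ⟨(e.symm z).support, ?_⟩
    have h1 : ∀ i, ((T i).subtype ∘ₗ (DirectSum.component ℂ ι _ i) ∘ₗ e.symm.toLinearMap) z
        = ((e.symm z) i : M) := fun i => rfl
    calc z = e (e.symm z) := (e.apply_symm_apply z).symm
      _ = e (∑ i ∈ (e.symm z).support, DirectSum.of _ i ((e.symm z) i)) := by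
          rw [DirectSum.sum_support_of]
      _ = ∑ i ∈ (e.symm z).support, ((e.symm z) i : M) := by
          rw [map_sum]
          exact Finset.sum_congr rfl fun i _ => DirectSum.coeLinearMap_of T i _
      _ = _ := Finset.sum_congr rfl fun i _ => (h1 i).symm

theorem proj_comm (T : ι → Submodule ℂ M) (T' : ι → Submodule ℂ N)
    (π : ι → M →ₗ[ℂ] M) (π' : ι → N →ₗ[ℂ] N)
    (hmem : ∀ i z, π i z ∈ T i)
    (hval : ∀ i j (z : M), z ∈ T j → π i z = if i = j then z else 0)
    (hval' : ∀ i j (z : N), z ∈ T' j → π' i z = if i = j then z else 0)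
    (hsum : ∀ z : M, ∃ t : Finset ι, z = ∑ i ∈ t, π i z)
    (f : M →ₗ[ℂ] N) (hf : ∀ i z, z ∈ T i → f z ∈ T' i)
    (i : ι) (x : M) : π' i (f x) = f (π i x) := by
  classical
  obtain ⟨t, ht⟩ := hsum x
  have h1 : π i x = if i ∈ t then π i x else 0 := by
    conv_lhs => rw [ht, map_sum]
    rw [Finset.sum_congr rfl fun j _ => hval i j (π j x) (hmem j x)]
    exact Finset.sum_ite_eq t i _
  have h2 : π' i (f x) = if i ∈ t then f (π i x) else 0 := by
    conv_lhs => rw [ht, map_sum, map_sum]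
    rw [Finset.sum_congr rfl fun j _ => hval' i j (f (π j x)) (hf j _ (hmem j x))]
    exact Finset.sum_ite_eq t i _
  rw [h2]
  by_cases hit : i ∈ t
  · rw [if_pos hit]
  · rw [if_neg hit]
    rw [h1, if_neg hit, map_zero]

end aux

/-- a direct sum of squares and dots satisfies the `∂∂̄`-Lemma. -/
theorem stmt11
    (hd1 : ∀ p q (x : A p q), d1 (p+1) q (d1 p q x) = 0)
    (hd2 : ∀ p q (x : A p q), d2 p (q+1) (d2 p q x) = 0)
    (hc : ∀ p q (x : A p q), d1 p (q+1) (d2 p q x) + d2 (p+1) q (d1 p q x) = 0)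
    (ι : Type) (S : ι → ∀ p q : ℤ, Submodule ℂ (A p q))
    (hdec : IsDecomposition A d1 d2 ι S)
    (hsd : ∀ i, IsSquareComplex A d1 d2 (S i) ∨ IsDot A d1 d2 (S i)) :
    ∀ (p q : ℤ) (x : A (p+1) (q+1)), d1 (p+1) (q+1) x = 0 → d2 (p+1) (q+1) x = 0 →
      x ∈ range (d1 p (q+1)) ⊔ range (d2 (p+1) q) → x ∈ range (ddb A d1 d2 p q) := by
  classical
  intro p q x hx1 hx2 hxim
  obtain ⟨hsub, htop, hind⟩ := hdec
  have hproj : ∀ r s : ℤ, ∃ π : ι → (A r s →ₗ[ℂ] A r s),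
      (∀ i z, π i z ∈ S i r s) ∧
      (∀ i j (z : A r s), z ∈ S j r s → π i z = if i = j then z else 0) ∧
      (∀ z : A r s, ∃ t : Finset ι, z = ∑ i ∈ t, π i z) :=
    fun r s => proj_exists (fun i => S i r s) (htop r s) (hind r s)
  choose π hmem hval hsum using hproj
  have hf1 : ∀ (r s : ℤ) i (z : A r s), z ∈ S i r s → d1 r s z ∈ S i (r+1) s :=
    fun r s i z hz => ((hsub i) r s).1 (Submodule.mem_map_of_mem hz)
  have hf2 : ∀ (r s : ℤ) i (z : A r s), z ∈ S i r s → d2 r s z ∈ S i r (s+1) :=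
    fun r s i z hz => ((hsub i) r s).2 (Submodule.mem_map_of_mem hz)
  have hcomm1 : ∀ (r s : ℤ) i (z : A r s), π (r+1) s i (d1 r s z) = d1 r s (π r s i z) :=
    fun r s i z => proj_comm (fun i => S i r s) (fun i => S i (r+1) s) (π r s) (π (r+1) s)
      (hmem r s) (hval r s) (hval (r+1) s) (hsum r s) (d1 r s) (hf1 r s) i z
  have hcomm2 : ∀ (r s : ℤ) i (z : A r s), π r (s+1) i (d2 r s z) = d2 r s (π r s i z) :=
    fun r s i z => proj_comm (fun i => S i r s) (fun i => S i r (s+1)) (π r s) (π r (s+1))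
      (hmem r s) (hval r s) (hval r (s+1)) (hsum r s) (d2 r s) (hf2 r s) i z
  rw [Submodule.mem_sup] at hxim
  obtain ⟨y, hy, z, hz, hyz⟩ := hxim
  obtain ⟨u, rfl⟩ := hy
  obtain ⟨v, rfl⟩ := hz
  have key : ∀ i, π (p+1) (q+1) i x ∈ range (ddb A d1 d2 p q) := by
    intro i
    have hxi_mem : π (p+1) (q+1) i x ∈ S i (p+1) (q+1) := hmem (p+1) (q+1) i x
    have hxi_d1 : d1 (p+1) (q+1) (π (p+1) (q+1) i x) = 0 := by
      rw [← hcomm1 (p+1) (q+1) i x, hx1, map_zero]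
    have hxi_d2 : d2 (p+1) (q+1) (π (p+1) (q+1) i x) = 0 := by
      rw [← hcomm2 (p+1) (q+1) i x, hx2, map_zero]
    have hxi_eq : π (p+1) (q+1) i x
        = d1 p (q+1) (π p (q+1) i u) + d2 (p+1) q (π (p+1) q i v) := by
      rw [← hyz, map_add, hcomm1 p (q+1) i u, hcomm2 (p+1) q i v]
    rcases hsd i with hsq | hdot
    · obtain ⟨a, b, _, hsupp, hm1, hd1', hm2, hd2', hm3, hd3', hm4, hd4'⟩ := hsq
      by_cases hpos : (p+1 = a ∨ p+1 = a+1) ∧ (q+1 = b ∨ q+1 = b+1)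
      · rcases hpos with ⟨ha | ha, hb | hb⟩
        · -- (p+1,q+1) = (a,b)
          obtain rfl : a = p + 1 := ha.symm
          obtain rfl : b = q + 1 := hb.symm
          have : π (p+1) (q+1) i x = 0 :=
            Submodule.disjoint_def.mp hd1' _ hxi_mem (LinearMap.mem_ker.mpr hxi_d1)
          rw [this]; exact zero_mem _
        · -- (p+1,q+1) = (a, b+1)
          obtain rfl : a = p + 1 := ha.symm
          obtain rfl : q = b := by omega
          have : π (p+1) (q+1) i x = 0 :=
            Submodule.disjoint_def.mp hd4' _ hxi_mem (LinearMap.mem_ker.mpr hxi_d1)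
          rw [this]; exact zero_mem _
        · -- (p+1,q+1) = (a+1, b)
          obtain rfl : p = a := by omega
          obtain rfl : b = q + 1 := hb.symm
          have : π (p+1) (q+1) i x = 0 :=
            Submodule.disjoint_def.mp hd3' _ hxi_mem (LinearMap.mem_ker.mpr hxi_d2)
          rw [this]; exact zero_mem _
        · -- (p+1,q+1) = (a+1, b+1)
          obtain rfl : p = a := by omega
          obtain rfl : q = b := by omega
          rw [← hm4] at hxi_mem
          obtain ⟨w, hw, hw2⟩ := hxi_mem
          rw [← hm2] at hw
          obtain ⟨c, _, hc2⟩ := hw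
          exact ⟨c, by rw [LinearMap.comp_apply, hc2, hw2]⟩
      · have hbot : S i (p+1) (q+1) = ⊥ := hsupp (p+1) (q+1) hpos
        rw [hbot, Submodule.mem_bot] at hxi_mem
        rw [hxi_mem]; exact zero_mem _
    · obtain ⟨a, b, _, hsupp, _, _⟩ := hdot
      by_cases hpos : p + 1 = a ∧ q + 1 = b
      · obtain ⟨ha, hb⟩ := hpos
        obtain rfl : a = p + 1 := ha.symm
        obtain rfl : b = q + 1 := hb.symm
        have hu : π p (q+1) i u = 0 := by
          have := hmem p (q+1) i u
          rw [hsupp p (q+1) (by intro h; omega), Submodule.mem_bot] at this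
          exact this
        have hv : π (p+1) q i v = 0 := by
          have := hmem (p+1) q i v
          rw [hsupp (p+1) q (by intro h; omega), Submodule.mem_bot] at this
          exact this
        rw [hxi_eq, hu, hv, map_zero, map_zero, add_zero]
        exact zero_mem _
      · have hbot : S i (p+1) (q+1) = ⊥ := hsupp (p+1) (q+1) hpos
        rw [hbot, Submodule.mem_bot] at hxi_mem
        rw [hxi_mem]; exact zero_mem _
  obtain ⟨t, ht⟩ := hsum (p+1) (q+1) x
  rw [ht]
  exact Submodule.sum_mem _ fun i _ => key i
end
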